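/- Let $U$ and $Q$ be finite-dimensional complex vector spaces and $\widetilde{\mathcal A} = \{u \otimes q + c\,u^2 : u \in U, q \in Q, c \in \mathbb{C}\} \subset (U \otimes Q) \oplus S^2U$. For $\beta = u \otimes q + u^2$ with $u \neq 0$, $q \neq 0$, the set $T_\beta = \{u \otimes q' + u' \otimes q + 2\,u \circ u' : u' \in U,\ q' \in Q\}$ is a linear subspace of dimension $\dim U + \dim Q$ containing the velocity vector at $t=0$ of every smooth curve in $\widetilde{\mathcal A}$ through $\beta$. -/

import Mathlib

open Module

/-- Ambient space modelling `(U ⊗ Q) ⊕ S²U` with `U = ℂᵏ`, `Q = ℂᵐ`. -/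
abbrev Amb (k m : ℕ) := (Fin k → Fin m → ℂ) × (Fin k → Fin k → ℂ)

/-- `u ⊗ q`. -/
def outer {k m : ℕ} (u : Fin k → ℂ) (q : Fin m → ℂ) : Fin k → Fin m → ℂ :=
  fun i j => u i * q j

/-- `u² ∈ S²U`. -/
def sqv {k : ℕ} (u : Fin k → ℂ) : Fin k → Fin k → ℂ := fun i j => u i * u j

/-- `2 u ∘ u' ∈ S²U` (twice the symmetric product). -/
def symTwo {k : ℕ} (u u' : Fin k → ℂ) : Fin k → Fin k → ℂ :=
  fun i j => u i * u' j + u' i * u j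

open LinearMap

/-!
The tangent space is the image of the differential `(u', q') ↦ (u ⊗ q' + u' ⊗ q, 2 u ∘ u')` of
`(u, q) ↦ (u ⊗ q, u²)`. It is injective when `u ≠ 0`: the `S²U` component `2 u ∘ u'` already
forces `u' = 0`, and then `u ⊗ q' = 0` forces `q' = 0`. The extra `c`-direction of the cone adds
nothing, because the velocity `c' u²` is the image of the radial direction `(c'/2) (u, -q)`.
-/

section Algebra

variable {k m : ℕ}

@[simp]
theorem outer_zero_left (q : Fin m → ℂ) : outer (0 : Fin k → ℂ) q = 0 := by
  ext i j
  simp [outer]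

theorem eq_zero_of_outer_eq_zero {u : Fin k → ℂ} {q : Fin m → ℂ} (hu : u ≠ 0)
    (h : outer u q = 0) : q = 0 := by
  obtain ⟨i, hi⟩ : ∃ i, u i ≠ 0 := Function.ne_iff.mp hu
  funext j
  have hij : u i * q j = 0 := congrFun (congrFun h i) j
  exact (mul_eq_zero.mp hij).resolve_left hi

theorem eq_zero_of_symTwo_eq_zero {u u' : Fin k → ℂ} (hu : u ≠ 0) (h : symTwo u u' = 0) :
    u' = 0 := by
  obtain ⟨i, hi⟩ : ∃ i, u i ≠ 0 := Function.ne_iff.mp hu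
  have hrow (j : Fin k) : u i * u' j + u' i * u j = 0 := congrFun (congrFun h i) j
  have hii : u' i = 0 := by
    have : u i * u' i = 0 := by linear_combination hrow i / 2
    exact (mul_eq_zero.mp this).resolve_left hi
  funext j
  have : u i * u' j = 0 := by linear_combination hrow j - u j * hii
  exact (mul_eq_zero.mp this).resolve_left hi

/-- The differential of `(u, q) ↦ (u ⊗ q, u²)` at `(u, q)`. -/
def coneTangentMap (u : Fin k → ℂ) (q : Fin m → ℂ) :
    ((Fin k → ℂ) × (Fin m → ℂ)) →ₗ[ℂ] Amb k m where
  toFun p := (outer u p.2 + outer p.1 q, symTwo u p.1)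
  map_add' p p' := by
    ext i j <;> simp only [outer, symTwo, Prod.fst_add, Prod.snd_add, Pi.add_apply,
      Prod.mk_add_mk] <;> ring
  map_smul' c p := by
    ext i j <;> simp only [outer, symTwo, Prod.smul_fst, Prod.smul_snd, Pi.smul_apply,
      smul_eq_mul, Pi.add_apply, Prod.smul_mk, RingHom.id_apply] <;> ring

theorem coe_range_coneTangentMap (u : Fin k → ℂ) (q : Fin m → ℂ) :
    (range (coneTangentMap u q) : Set (Amb k m)) =
      {x | ∃ (u' : Fin k → ℂ) (q' : Fin m → ℂ), x = (outer u q' + outer u' q, symTwo u u')} := by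
  ext x
  simp only [SetLike.mem_coe, mem_range, Prod.exists, Set.mem_ofPred_eq, eq_comm]
  rfl

theorem injective_coneTangentMap {u : Fin k → ℂ} (q : Fin m → ℂ) (hu : u ≠ 0) :
    Function.Injective (coneTangentMap u q) := by
  rw [← ker_eq_bot, Submodule.eq_bot_iff]
  rintro ⟨u', q'⟩ h
  obtain ⟨h₁, h₂⟩ := Prod.ext_iff.mp (mem_ker.mp h)
  obtain rfl := eq_zero_of_symTwo_eq_zero hu h₂
  obtain rfl := eq_zero_of_outer_eq_zero hu (by simpa [coneTangentMap] using h₁)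
  rfl

theorem finrank_range_coneTangentMap {u : Fin k → ℂ} (q : Fin m → ℂ) (hu : u ≠ 0) :
    finrank ℂ (range (coneTangentMap u q)) = k + m := by
  rw [finrank_range_of_inj (injective_coneTangentMap q hu)]
  simp

/-- Moving `u` along itself and `q` against itself fixes `u ⊗ q` to first order and scales `u²`. -/
theorem coneTangentMap_add_smul_sub_smul (u u' : Fin k → ℂ) (q q' : Fin m → ℂ) (a : ℂ) :
    coneTangentMap u q (u' + a • u, q' - a • q) =
      (outer u' q + outer u q', symTwo u u' + (2 * a) • sqv u) := by
  ext i j <;> simp only [coneTangentMap, coe_mk, AddHom.coe_mk, outer, symTwo, sqv, Pi.add_apply,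
    Pi.sub_apply, Pi.smul_apply, smul_eq_mul] <;> ring

end Algebra

section Calculus

variable {𝕜 : Type*} [NontriviallyNormedField 𝕜] [NormedAlgebra 𝕜 ℂ] {k m : ℕ}
  {u_ : 𝕜 → Fin k → ℂ} {q_ : 𝕜 → Fin m → ℂ} {c_ : 𝕜 → ℂ} {u' : Fin k → ℂ} {q' : Fin m → ℂ}
  {c' : ℂ} {t : 𝕜}

theorem HasDerivAt.outer (hu : HasDerivAt u_ u' t) (hq : HasDerivAt q_ q' t) :
    HasDerivAt (fun s => outer (u_ s) (q_ s)) (outer u' (q_ t) + outer (u_ t) q') t := by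
  refine hasDerivAt_pi.mpr fun i => hasDerivAt_pi.mpr fun j => ?_
  exact (hasDerivAt_pi.mp hu i).mul (hasDerivAt_pi.mp hq j)

theorem HasDerivAt.sqv (hu : HasDerivAt u_ u' t) :
    HasDerivAt (fun s => sqv (u_ s)) (symTwo (u_ t) u') t := by
  refine hasDerivAt_pi.mpr fun i => hasDerivAt_pi.mpr fun j => ?_
  have := (hasDerivAt_pi.mp hu i).mul (hasDerivAt_pi.mp hu j)
  rwa [add_comm] at this

theorem HasDerivAt.outer_prodMk_smul_sqv (hu : HasDerivAt u_ u' t) (hq : HasDerivAt q_ q' t)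
    (hc : HasDerivAt c_ c' t) :
    HasDerivAt (fun s => (_root_.outer (u_ s) (q_ s), c_ s • _root_.sqv (u_ s)))
      (_root_.outer u' (q_ t) + _root_.outer (u_ t) q',
        c_ t • symTwo (u_ t) u' + c' • _root_.sqv (u_ t)) t :=
  (hu.outer hq).prodMk (hc.smul hu.sqv)

end Calculus

theorem tangent_space_of_vmrt_cone_at_generic_point_general
    (k m : ℕ) (u : Fin k → ℂ) (q : Fin m → ℂ) (hu : u ≠ 0) :
    (∃ T : Submodule ℂ (Amb k m),
        (T : Set (Amb k m)) =
          {x | ∃ (u' : Fin k → ℂ) (q' : Fin m → ℂ),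
                x = (outer u q' + outer u' q, symTwo u u')} ∧
        finrank ℂ T = k + m) ∧
    (∀ (u_ : ℂ → Fin k → ℂ) (q_ : ℂ → Fin m → ℂ) (c_ : ℂ → ℂ)
        (γ : ℂ → Amb k m) (v : Amb k m),
        (∀ t, γ t = (outer (u_ t) (q_ t), c_ t • sqv (u_ t))) →
        u_ 0 = u → q_ 0 = q → c_ 0 = 1 →
        DifferentiableAt ℂ u_ 0 → DifferentiableAt ℂ q_ 0 → DifferentiableAt ℂ c_ 0 →
        HasDerivAt γ v 0 →
        v ∈ {x : Amb k m | ∃ (u' : Fin k → ℂ) (q' : Fin m → ℂ),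
                x = (outer u q' + outer u' q, symTwo u u')}) := by
  refine ⟨⟨range (coneTangentMap u q), coe_range_coneTangentMap u q,
    finrank_range_coneTangentMap q hu⟩, ?_⟩
  rintro u_ q_ c_ γ v hγ rfl rfl hc₀ hu_ hq_ hc_ hv
  obtain rfl : γ = _ := funext hγ
  have hvel := hu_.hasDerivAt.outer_prodMk_smul_sqv hq_.hasDerivAt hc_.hasDerivAt
  rw [hc₀, one_smul] at hvel
  rw [← coe_range_coneTangentMap, hv.unique hvel, SetLike.mem_coe]
  refine ⟨(deriv u_ 0 + (deriv c_ 0 / 2) • u_ 0, deriv q_ 0 - (deriv c_ 0 / 2) • q_ 0), ?_⟩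
  rw [coneTangentMap_add_smul_sub_smul, mul_div_cancel₀ _ two_ne_zero]

/-- at `β = u ⊗ q + u²` (with `u ≠ 0`, `q ≠ 0`) the set
`T_β = {u ⊗ q' + u' ⊗ q + 2 u ∘ u'}` is a linear subspace of dimension `dim U + dim Q`
containing the velocity at `t = 0` of every smooth curve in
`Ã = {u ⊗ q + c u²}` through `β` (so with `u₀ = u`, `q₀ = q`, `c₀ = 1`). -/
theorem tangent_space_of_vmrt_cone_at_generic_point
    (k m : ℕ) (u : Fin k → ℂ) (q : Fin m → ℂ) (hu : u ≠ 0) (hq : q ≠ 0) :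
    (∃ T : Submodule ℂ (Amb k m),
        (T : Set (Amb k m)) =
          {x | ∃ (u' : Fin k → ℂ) (q' : Fin m → ℂ),
                x = (outer u q' + outer u' q, symTwo u u')} ∧
        finrank ℂ T = k + m) ∧
    (∀ (u_ : ℂ → Fin k → ℂ) (q_ : ℂ → Fin m → ℂ) (c_ : ℂ → ℂ)
        (γ : ℂ → Amb k m) (v : Amb k m),
        (∀ t, γ t = (outer (u_ t) (q_ t), c_ t • sqv (u_ t))) →
        u_ 0 = u → q_ 0 = q → c_ 0 = 1 →
        DifferentiableAt ℂ u_ 0 → DifferentiableAt ℂ q_ 0 → DifferentiableAt ℂ c_ 0 →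
        HasDerivAt γ v 0 →
        v ∈ {x : Amb k m | ∃ (u' : Fin k → ℂ) (q' : Fin m → ℂ),
                x = (outer u q' + outer u' q, symTwo u u')}) :=
  tangent_space_of_vmrt_cone_at_generic_point_general k m u q hu
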